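/- arXiv:1607.07625 — 2 statements merged into one kernel-verified Lean document; each statement's English description precedes it below -/
import Mathlib

section
/- For density matrices ρ₀, ρ₁ and any t ≥ 0, writing P⁻ and P⁰ for the projections onto the negative and null eigenspaces of ρ₀ − tρ₁, the Neyman-Pearson test T = {ρ₀ − tρ₁ > 0} satisfies 1 − tr(ρ₀T) = tr(ρ₀(P⁻ + P⁰)) and the minimum of tr(ρ₀(I−S)) + t·tr(ρ₁S) over Hermitian 0 ≤ S ≤ I equals tr(ρ₀(P⁻+P⁰)) + t·tr(ρ₁{ρ₀ − tρ₁ > 0}). -/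
open Matrix
open scoped ComplexOrder

/-- Spectral projection of a Hermitian matrix onto the eigenspaces whose
eigenvalue satisfies the predicate `pred`. -/
noncomputable def specProj {ι : Type*} [Fintype ι] [DecidableEq ι]
    {A : Matrix ι ι ℂ} (hA : A.IsHermitian) (pred : ℝ → Prop) : Matrix ι ι ℂ :=
  letI := Classical.decPred pred
  (hA.eigenvectorUnitary : Matrix ι ι ℂ) *
    Matrix.diagonal (fun i => if pred (hA.eigenvalues i) then (1 : ℂ) else 0) *
    star (hA.eigenvectorUnitary : Matrix ι ι ℂ)

section aux

variable {ι : Type*} [Fintype ι] [DecidableEq ι]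

lemma trace_diag_mul (d : ι → ℂ) (M : Matrix ι ι ℂ) :
    Matrix.trace (Matrix.diagonal d * M) = ∑ i, d i * M i i := by
  simp [Matrix.trace, Matrix.diag, Matrix.mul_apply, Matrix.diagonal_apply, ite_mul]

lemma trace_conj_diag (U S : Matrix ι ι ℂ) (d : ι → ℂ) :
    Matrix.trace (U * Matrix.diagonal d * star U * S)
      = ∑ i, d i * (star U * S * U) i i := by
  rw [show U * Matrix.diagonal d * star U * S = U * (Matrix.diagonal d * (star U * S)) from by
    simp [mul_assoc]]
  rw [Matrix.trace_mul_comm]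
  rw [show Matrix.diagonal d * (star U * S) * U = Matrix.diagonal d * (star U * S * U) from by
    simp [mul_assoc]]
  exact trace_diag_mul _ _

lemma psd_re_diag_nonneg {M : Matrix ι ι ℂ} (hM : M.PosSemidef) (i : ι) :
    0 ≤ (M i i).re := by
  have h := hM.dotProduct_mulVec_nonneg (Pi.single i 1)
  have he : star (Pi.single i 1) ⬝ᵥ M *ᵥ (Pi.single i 1 : ι → ℂ) = M i i := by
    simp [dotProduct, Matrix.mulVec, Pi.single_apply, mul_ite, ite_mul,
      Finset.sum_ite_eq, Finset.sum_ite_eq']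
  rw [he] at h
  simpa using (Complex.le_def.mp h).1

lemma specProj_eq {A : Matrix ι ι ℂ} (hA : A.IsHermitian) (pred : ℝ → Prop)
    [DecidablePred pred] :
    specProj hA pred = (hA.eigenvectorUnitary : Matrix ι ι ℂ) *
      Matrix.diagonal (fun i => if pred (hA.eigenvalues i) then (1 : ℂ) else 0) *
      star (hA.eigenvectorUnitary : Matrix ι ι ℂ) := by
  unfold specProj
  refine congrArg₂ (· * ·) (congrArg₂ (· * ·) rfl
    (congrArg Matrix.diagonal (funext fun i => ?_))) rfl
  exact @if_congr _ _ _ (Classical.decPred pred (hA.eigenvalues i)) _ _ _ _ _ Iff.rfl rfl rfl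

end aux

/-- the Neyman–Pearson test `T = {ρ₀ − tρ₁ > 0}` satisfies
`1 − tr(ρ₀T) = tr(ρ₀(P⁻ + P⁰))`, and the minimum of the Lagrangian
`tr(ρ₀(I−S)) + t·tr(ρ₁S)` over tests equals
`tr(ρ₀(P⁻+P⁰)) + t·tr(ρ₁{ρ₀ − tρ₁ > 0})`. -/
theorem neymanPearson_value {ι : Type*} [Fintype ι] [DecidableEq ι]
    {ρ₀ ρ₁ : Matrix ι ι ℂ}
    (h₀ : ρ₀.PosSemidef) (h₀t : ρ₀.trace = 1)
    (h₁ : ρ₁.PosSemidef) (h₁t : ρ₁.trace = 1)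
    {t : ℝ} (ht : 0 ≤ t) (hD : (ρ₀ - (t : ℂ) • ρ₁).IsHermitian) :
    1 - (Matrix.trace (ρ₀ * specProj hD (fun x => 0 < x))).re =
      (Matrix.trace (ρ₀ * (specProj hD (fun x => x < 0) +
        (1 - specProj hD (fun x => 0 < x) - specProj hD (fun x => x < 0))))).re ∧
    IsLeast {x : ℝ | ∃ S : Matrix ι ι ℂ, S.PosSemidef ∧ (1 - S).PosSemidef ∧
        x = (Matrix.trace (ρ₀ * (1 - S))).re + t * (Matrix.trace (ρ₁ * S)).re}
      ((Matrix.trace (ρ₀ * (specProj hD (fun x => x < 0) +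
          (1 - specProj hD (fun x => 0 < x) - specProj hD (fun x => x < 0))))).re
        + t * (Matrix.trace (ρ₁ * specProj hD (fun x => 0 < x))).re) := by
  classical
  set U : Matrix ι ι ℂ := (hD.eigenvectorUnitary : Matrix ι ι ℂ) with hUdef
  have hU1 : U * star U = 1 := Matrix.mem_unitaryGroup_iff.mp hD.eigenvectorUnitary.2
  have hU1' : star U * U = 1 := Matrix.mem_unitaryGroup_iff'.mp hD.eigenvectorUnitary.2
  set lam : ι → ℝ := hD.eigenvalues with hlam
  set T : Matrix ι ι ℂ := specProj hD (fun x => 0 < x) with hTdef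
  set ind : ι → ℂ := fun i => if 0 < lam i then (1 : ℂ) else 0 with hind
  have hTspec : T = U * Matrix.diagonal ind * star U := specProj_eq hD _
  -- the P⁻ + P⁰ sum is just 1 - T
  have hPsum : specProj hD (fun x => x < 0) +
      (1 - specProj hD (fun x => 0 < x) - specProj hD (fun x => x < 0)) = 1 - T := by
    rw [← hTdef]; abel
  -- trace formula
  have key : ∀ S : Matrix ι ι ℂ,
      (Matrix.trace ((ρ₀ - (t : ℂ) • ρ₁) * S)).re
        = ∑ i, lam i * ((star U * S * U) i i).re := by
    intro S
    conv_lhs => rw [hD.spectral_theorem]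
    rw [Unitary.conjStarAlgAut_apply, ← hUdef, ← hlam, trace_conj_diag, Complex.re_sum]
    refine Finset.sum_congr rfl fun i _ => ?_
    have : (RCLike.ofReal ∘ lam) i = ((lam i : ℝ) : ℂ) := rfl
    rw [this, Complex.re_ofReal_mul]
  -- value formula
  have hval : ∀ S : Matrix ι ι ℂ,
      (Matrix.trace (ρ₀ * (1 - S))).re + t * (Matrix.trace (ρ₁ * S)).re
        = 1 - (Matrix.trace ((ρ₀ - (t : ℂ) • ρ₁) * S)).re := by
    intro S
    have e1 : (ρ₀ - (t : ℂ) • ρ₁) * S = ρ₀ * S - (t : ℂ) • (ρ₁ * S) := by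
      rw [sub_mul, smul_mul_assoc]
    rw [e1, mul_one_sub]
    simp only [Matrix.trace_sub, Matrix.trace_smul, h₀t, Complex.sub_re, Complex.one_re,
      smul_eq_mul, Complex.re_ofReal_mul]
    ring
  -- diagonal conjugation of T
  have hTdiag : star U * T * U = Matrix.diagonal ind := by
    rw [hTspec]
    simp only [← mul_assoc]
    rw [hU1', one_mul, mul_assoc, hU1', mul_one]
  -- trace of D * T
  have hDT : (Matrix.trace ((ρ₀ - (t : ℂ) • ρ₁) * T)).re
      = ∑ i, lam i * (if 0 < lam i then (1 : ℝ) else 0) := by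
    rw [key T]
    refine Finset.sum_congr rfl fun i _ => ?_
    rw [hTdiag, Matrix.diagonal_apply_eq, hind]
    by_cases h : 0 < lam i <;> simp [h]
  -- T and 1 - T are PSD
  have hindnn : ∀ i, (0 : ℂ) ≤ ind i := by
    intro i; rw [hind]; dsimp only; split_ifs <;> norm_num
  have hTpsd : T.PosSemidef := by
    rw [hTspec, Matrix.star_eq_conjTranspose]
    exact (Matrix.PosSemidef.diagonal hindnn).mul_mul_conjTranspose_same U
  have h1Tpsd : (1 - T).PosSemidef := by
    have e : (1 : Matrix ι ι ℂ) - T = U * Matrix.diagonal (fun i => 1 - ind i) * star U := by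
      have : Matrix.diagonal (fun i => 1 - ind i) = 1 - Matrix.diagonal ind := by
        rw [← Matrix.diagonal_one, Matrix.diagonal_sub]
      rw [this, mul_sub, sub_mul, mul_one, hU1, hTspec]
    rw [e, Matrix.star_eq_conjTranspose]
    refine (Matrix.PosSemidef.diagonal fun i => ?_).mul_mul_conjTranspose_same U
    rw [hind]; dsimp only; split_ifs <;> norm_num
  refine ⟨?_, ?_, ?_⟩
  · -- part 1
    rw [hPsum, mul_one_sub, Matrix.trace_sub, h₀t, Complex.sub_re, Complex.one_re]
  · -- membership
    exact ⟨T, hTpsd, h1Tpsd, by rw [hPsum]⟩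
  · -- lower bound
    rintro x ⟨S, hS, h1S, rfl⟩
    rw [hPsum, hval T, hval S]
    have hM : ((star U * S * U)).PosSemidef := by
      rw [Matrix.star_eq_conjTranspose]
      exact hS.conjTranspose_mul_mul_same U
    have h1M : ((1 : Matrix ι ι ℂ) - star U * S * U).PosSemidef := by
      have e : (1 : Matrix ι ι ℂ) - star U * S * U = star U * (1 - S) * U := by
        rw [mul_one_sub, sub_mul, hU1']
      rw [e, Matrix.star_eq_conjTranspose]
      exact h1S.conjTranspose_mul_mul_same U
    have hm0 : ∀ i, 0 ≤ ((star U * S * U) i i).re := fun i => psd_re_diag_nonneg hM i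
    have hm1 : ∀ i, ((star U * S * U) i i).re ≤ 1 := by
      intro i
      have := psd_re_diag_nonneg h1M i
      simp only [Matrix.sub_apply, Matrix.one_apply_eq, Complex.sub_re, Complex.one_re] at this
      linarith
    have hle : (Matrix.trace ((ρ₀ - (t : ℂ) • ρ₁) * S)).re
        ≤ (Matrix.trace ((ρ₀ - (t : ℂ) • ρ₁) * T)).re := by
      rw [key S, hDT]
      refine Finset.sum_le_sum fun i _ => ?_
      by_cases h : 0 < lam i
      · simp only [h, if_pos]
        calc lam i * ((star U * S * U) i i).re ≤ lam i * 1 :=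
          mul_le_mul_of_nonneg_left (hm1 i) h.le
        _ = lam i * 1 := rfl
      · simp only [h, if_neg, not_false_iff, mul_zero]
        exact mul_nonpos_of_nonpos_of_nonneg (not_lt.1 h) (hm0 i)
    linarith
end

section
/- Let W : Fin M → (density matrices on ℂⁿ) be a classical-quantum channel restricted to a codebook of M codewords, used with equiprobable messages. Then for every density matrix μ₀ and every t ≥ 0, the minimum error probability Pe over all decoding POVMs satisfies Pe ≥ (1/M)·Σ_m tr(W_m · {W_m − tμ₀ ≤ 0}) − t/M. -/
/-!
Write `A_m = W_m - t μ₀` and `P_m = {A_m ≤ 0}`, so that `A_m (1 - P_m)` is the positive part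
of `A_m`. Since `0 ≤ E_m ≤ 1`, `tr (A_m E_m) ≤ tr (A_m (1 - P_m))`, and since `μ₀ ≥ 0`,
`tr (A_m (1 - P_m)) ≤ tr (W_m (1 - P_m)) = 1 - tr (W_m P_m)`. Hence
`tr (W_m E_m) ≤ 1 - tr (W_m P_m) + t tr (μ₀ E_m)`, and summing over `m` with `∑ E_m = 1` and
`tr μ₀ = 1` gives `∑ tr (W_m E_m) ≤ M - ∑ tr (W_m P_m) + t`.
-/

open Matrix
open scoped ComplexOrder

open scoped MatrixOrder

section RCLike

variable {ι 𝕜 : Type*} [Fintype ι] [DecidableEq ι] [RCLike 𝕜]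

lemma Matrix.PosSemidef.trace_mul_nonneg {A B : Matrix ι ι 𝕜} (hA : A.PosSemidef)
    (hB : B.PosSemidef) : 0 ≤ (A * B).trace := by
  obtain ⟨C, rfl⟩ := CStarAlgebra.nonneg_iff_eq_star_mul_self.mp hA.nonneg
  rw [mul_assoc, trace_mul_comm, star_eq_conjTranspose]
  exact (hB.mul_mul_conjTranspose_same C).trace_nonneg

lemma Matrix.continuousOn_spectrum_real (A : Matrix ι ι 𝕜) (f : ℝ → ℝ) :
    ContinuousOn f (spectrum ℝ A) :=
  A.finite_real_spectrum.continuousOn f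

lemma Matrix.posSemidef_cfc {A : Matrix ι ι 𝕜} {f : ℝ → ℝ} (hf : ∀ x, 0 ≤ f x) :
    (cfc f A).PosSemidef :=
  (cfc_nonneg fun x _ => hf x).posSemidef

end RCLike

lemma Matrix.posSemidef_one_sub_of_sum_eq_one {ι κ 𝕜 : Type*} [DecidableEq ι] [Fintype κ]
    [RCLike 𝕜] {E : κ → Matrix ι ι 𝕜} (hE : ∀ k, (E k).PosSemidef) (hE1 : ∑ k, E k = 1)
    (k : κ) : (1 - E k).PosSemidef := by
  classical
  rw [← hE1, ← Finset.sum_erase_eq_sub (Finset.mem_univ k)]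
  exact posSemidef_sum _ fun j _ => hE j

namespace Matrix.IsHermitian

variable {ι : Type*} [Fintype ι] [DecidableEq ι] {A : Matrix ι ι ℂ} (hA : A.IsHermitian)

lemma specProj_eq_cfc (pred : ℝ → Prop) :
    specProj hA pred = cfc ({x | pred x}.indicator 1) A := by
  rw [hA.cfc_eq, IsHermitian.cfc, Unitary.conjStarAlgAut_apply, specProj]
  congr 3
  ext i
  by_cases h : pred (hA.eigenvalues i) <;> simp [h]

lemma one_sub_specProj (pred : ℝ → Prop) :
    1 - specProj hA pred = specProj hA (fun x => ¬ pred x) := by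
  rw [specProj_eq_cfc, specProj_eq_cfc, ← cfc_one ℝ A,
    ← cfc_sub _ _ _ (A.continuousOn_spectrum_real _) (A.continuousOn_spectrum_real _)]
  congr 1
  ext x
  by_cases h : pred x <;> simp [h]

lemma mul_specProj (pred : ℝ → Prop) :
    A * specProj hA pred = cfc (fun x => x * {x | pred x}.indicator 1 x) A := by
  rw [specProj_eq_cfc,
    cfc_mul _ _ _ (A.continuousOn_spectrum_real _) (A.continuousOn_spectrum_real _), cfc_id' ℝ A]

lemma posSemidef_specProj (pred : ℝ → Prop) : (specProj hA pred).PosSemidef := by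
  rw [specProj_eq_cfc]
  exact posSemidef_cfc fun x => Set.indicator_nonneg (fun _ _ => zero_le_one) x

lemma posSemidef_one_sub_specProj (pred : ℝ → Prop) : (1 - specProj hA pred).PosSemidef := by
  rw [one_sub_specProj]
  exact hA.posSemidef_specProj _

lemma posSemidef_neg_mul_specProj_nonpos : (-(A * specProj hA (· ≤ 0))).PosSemidef := by
  rw [mul_specProj, ← cfc_neg]
  refine posSemidef_cfc fun x => ?_
  by_cases h : x ≤ 0 <;> simp [h]

lemma posSemidef_mul_one_sub_specProj_nonpos :
    (A * (1 - specProj hA (· ≤ 0))).PosSemidef := by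
  rw [one_sub_specProj, mul_specProj]
  refine posSemidef_cfc fun x => ?_
  rcases le_or_gt x 0 with h | h
  · simp [h.not_gt]
  · simp [h, h.le]

lemma trace_mul_le_trace_mul_one_sub_specProj_nonpos {E : Matrix ι ι ℂ} (hE : E.PosSemidef)
    (hE1 : (1 - E).PosSemidef) : (A * E).trace ≤ (A * (1 - specProj hA (· ≤ 0))).trace := by
  set P := specProj hA (· ≤ 0)
  have hsplit : (A * (1 - P)).trace - (A * E).trace =
      (A * (1 - P) * (1 - E)).trace + (-(A * P) * E).trace := by
    simp only [mul_sub, sub_mul, mul_one, neg_mul, trace_sub, trace_neg, mul_assoc]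
    ring
  rw [← sub_nonneg, hsplit]
  exact add_nonneg (hA.posSemidef_mul_one_sub_specProj_nonpos.trace_mul_nonneg hE1)
    (hA.posSemidef_neg_mul_specProj_nonpos.trace_mul_nonneg hE)

end Matrix.IsHermitian

lemma re_trace_mul_le_one_sub_re_trace_mul_specProj {ι : Type*} [Fintype ι] [DecidableEq ι]
    {W μ E : Matrix ι ι ℂ} {t : ℝ} (hWt : W.trace = 1) (hμ : μ.PosSemidef) (ht : 0 ≤ t)
    (hA : (W - (t : ℂ) • μ).IsHermitian) (hE : E.PosSemidef) (hE1 : (1 - E).PosSemidef) :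
    (W * E).trace.re ≤ 1 - (W * specProj hA (· ≤ 0)).trace.re + t * (μ * E).trace.re := by
  have hpos := (Complex.le_def.mp (hA.trace_mul_le_trace_mul_one_sub_specProj_nonpos hE hE1)).1
  have hμP := (Complex.nonneg_iff.mp
    (hμ.trace_mul_nonneg (hA.posSemidef_one_sub_specProj (· ≤ 0)))).1
  simp only [sub_mul, mul_sub, mul_one, smul_mul, trace_sub, trace_smul, hWt, smul_eq_mul,
    Complex.sub_re, Complex.re_ofReal_mul, Complex.one_re] at hpos hμP
  linarith [mul_nonneg ht hμP]

theorem cq_channel_converse_general {n M : ℕ}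
    {W : Fin M → Matrix (Fin n) (Fin n) ℂ}
    (hWt : ∀ m, (W m).trace = 1)
    {μ₀ : Matrix (Fin n) (Fin n) ℂ} (hμ : μ₀.PosSemidef) (hμt : μ₀.trace = 1)
    {t : ℝ} (ht : 0 ≤ t)
    (hH : ∀ m, (W m - (t : ℂ) • μ₀).IsHermitian)
    {E : Fin M → Matrix (Fin n) (Fin n) ℂ}
    (hE : ∀ m, (E m).PosSemidef) (hE1 : ∑ m, E m = 1) :
    1 - (1 / M) * ∑ m, (Matrix.trace (W m * E m)).re ≥
      (1 / M) * (∑ m, (Matrix.trace (W m * specProj (hH m) (fun x => x ≤ 0))).re)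
        - t / M := by
  have hμE : ∑ m, (μ₀ * E m).trace.re = 1 := by
    rw [← Complex.re_sum, ← trace_sum, ← Finset.mul_sum, hE1, mul_one, hμt, Complex.one_re]
  have hsum : ∑ m, (W m * E m).trace.re ≤
      M - ∑ m, (W m * specProj (hH m) (· ≤ 0)).trace.re + t := by
    calc ∑ m, (W m * E m).trace.re
        ≤ ∑ m, (1 - (W m * specProj (hH m) (· ≤ 0)).trace.re + t * (μ₀ * E m).trace.re) :=
          Finset.sum_le_sum fun m _ => re_trace_mul_le_one_sub_re_trace_mul_specProj (hWt m) hμ ht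
            (hH m) (hE m) (posSemidef_one_sub_of_sum_eq_one hE hE1 m)
      _ = M - ∑ m, (W m * specProj (hH m) (· ≤ 0)).trace.re + t := by
          rw [Finset.sum_add_distrib, Finset.sum_sub_distrib, ← Finset.mul_sum, hμE]
          simp
  have hscaled := mul_le_mul_of_nonneg_left hsum (by positivity : (0 : ℝ) ≤ 1 / M)
  simp only [mul_add, mul_sub, one_div_mul_eq_div] at hscaled ⊢
  -- `M / M ≤ 1` also covers `M = 0`, where every `1 / M` is `0`.
  linarith [div_self_le_one (M : ℝ)]

/-- Hayashi–Nagaoka converse bound, Eq. (43): for a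
classical-quantum channel used with `M` equiprobable codewords, every
decoding POVM satisfies
`1 − (1/M)Σ_m tr(W_m E_m) ≥ (1/M)Σ_m tr(W_m {W_m − tμ₀ ≤ 0}) − t/M`. -/
theorem cq_channel_converse {n M : ℕ}
    {W : Fin M → Matrix (Fin n) (Fin n) ℂ}
    (hW : ∀ m, (W m).PosSemidef) (hWt : ∀ m, (W m).trace = 1)
    {μ₀ : Matrix (Fin n) (Fin n) ℂ} (hμ : μ₀.PosSemidef) (hμt : μ₀.trace = 1)
    {t : ℝ} (ht : 0 ≤ t)
    (hH : ∀ m, (W m - (t : ℂ) • μ₀).IsHermitian)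
    {E : Fin M → Matrix (Fin n) (Fin n) ℂ}
    (hE : ∀ m, (E m).PosSemidef) (hE1 : ∑ m, E m = 1) :
    1 - (1 / M) * ∑ m, (Matrix.trace (W m * E m)).re ≥
      (1 / M) * (∑ m, (Matrix.trace (W m * specProj (hH m) (fun x => x ≤ 0))).re)
        - t / M :=
  cq_channel_converse_general hWt hμ hμt ht hH hE hE1
end
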